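/- arXiv:1201.0891 — 2 statements merged into one kernel-verified Lean document; each statement's English description precedes it below -/
import Mathlib

section
/- A positive semidefinite d×d matrix ρ with tr(ρ) ≤ 1 satisfies t(ρ) = tr(ρ) if and only if t(T_f(ρ)) = tr(T_f(ρ)) for every word f over {1,…,m}. -/
noncomputable section
open Matrix
open scoped ComplexOrder

variable {d m r : ℕ}

/-- One step of process `i`: `T_i(ρ) = E_i(M₁ ρ M₁†) = ∑_j (E_{i,j} M₁) ρ (E_{i,j} M₁)†`. -/
def Tstep (E : Fin m → Fin r → Matrix (Fin d) (Fin d) ℂ)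
    (M1 : Matrix (Fin d) (Fin d) ℂ) (i : Fin m)
    (ρ : Matrix (Fin d) (Fin d) ℂ) : Matrix (Fin d) (Fin d) ℂ :=
  ∑ j, (E i j * M1) * ρ * (E i j * M1)ᴴ

/-- `T_f` for a word `f = s₁⋯s_n`: apply `T_{s₁}` first, then `T_{s₂}`, …, `T_{s_n}`. -/
def Tword (E : Fin m → Fin r → Matrix (Fin d) (Fin d) ℂ)
    (M1 : Matrix (Fin d) (Fin d) ℂ) (f : List (Fin m))
    (ρ : Matrix (Fin d) (Fin d) ℂ) : Matrix (Fin d) (Fin d) ℂ :=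
  f.foldl (fun σ k => Tstep E M1 k σ) ρ

/-- The support of a matrix: its column space, as a subspace of `ℂ^d`. -/
def supp (A : Matrix (Fin d) (Fin d) ℂ) : Submodule ℂ (Fin d → ℂ) :=
  LinearMap.range (Matrix.toLin' A)

/-- Length-`n` prefix of a schedule. -/
def prefixn (s : ℕ → Fin m) (n : ℕ) : List (Fin m) :=
  List.ofFn (fun i : Fin n => s i)

/-- Termination probability within a word `f`. -/
def tWord (E : Fin m → Fin r → Matrix (Fin d) (Fin d) ℂ)
    (M0 M1 : Matrix (Fin d) (Fin d) ℂ) (f : List (Fin m))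
    (ρ : Matrix (Fin d) (Fin d) ℂ) : ℝ :=
  ∑ n ∈ Finset.range (f.length + 1),
    (M0 * Tword E M1 (f.take n) ρ * M0ᴴ).trace.re

/-- Termination probability along a schedule `s`. -/
def tSched (E : Fin m → Fin r → Matrix (Fin d) (Fin d) ℂ)
    (M0 M1 : Matrix (Fin d) (Fin d) ℂ) (s : ℕ → Fin m)
    (ρ : Matrix (Fin d) (Fin d) ℂ) : ℝ :=
  ∑' n : ℕ, (M0 * Tword E M1 (prefixn s n) ρ * M0ᴴ).trace.re

/-- Termination probability `t(ρ)`: infimum over all schedules. -/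
def tInf (E : Fin m → Fin r → Matrix (Fin d) (Fin d) ℂ)
    (M0 M1 : Matrix (Fin d) (Fin d) ℂ)
    (ρ : Matrix (Fin d) (Fin d) ℂ) : ℝ :=
  ⨅ s : ℕ → Fin m, tSched E M0 M1 s ρ

/-- The reachable space `H_{R(ρ)}`. -/
def HR (E : Fin m → Fin r → Matrix (Fin d) (Fin d) ℂ)
    (M1 : Matrix (Fin d) (Fin d) ℂ)
    (ρ : Matrix (Fin d) (Fin d) ℂ) : Submodule ℂ (Fin d → ℂ) :=
  ⨆ f : List (Fin m), supp (Tword E M1 f ρ)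

/-- The average super-operator `T = (1/m) ∑ T_i`. -/
def Tavg (E : Fin m → Fin r → Matrix (Fin d) (Fin d) ℂ)
    (M1 : Matrix (Fin d) (Fin d) ℂ)
    (ρ : Matrix (Fin d) (Fin d) ℂ) : Matrix (Fin d) (Fin d) ℂ :=
  ((m : ℂ)⁻¹) • ∑ i : Fin m, Tstep E M1 i ρ

/-- `H_{R̄_n(ρ)} = ⋁_{k=0}^n supp(T^k(ρ))`. -/
def HRbar (E : Fin m → Fin r → Matrix (Fin d) (Fin d) ℂ)
    (M1 : Matrix (Fin d) (Fin d) ℂ)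
    (ρ : Matrix (Fin d) (Fin d) ℂ) (n : ℕ) : Submodule ℂ (Fin d → ℂ) :=
  ⨆ k : Fin (n + 1), supp ((Tavg E M1)^[k] ρ)

/-- Reachable termination probability `h(ρ)`. -/
def hProb (E : Fin m → Fin r → Matrix (Fin d) (Fin d) ℂ)
    (M0 M1 : Matrix (Fin d) (Fin d) ℂ)
    (ρ : Matrix (Fin d) (Fin d) ℂ) : ℝ :=
  sInf { x : ℝ | ∃ σ : Matrix (Fin d) (Fin d) ℂ,
    σ.PosSemidef ∧ σ.trace = 1 ∧ supp σ ≤ HR E M1 ρ ∧ x = tInf E M0 M1 σ }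

/-- `PD_f`: pure states diverging within the word `f`. -/
def PDword (E : Fin m → Fin r → Matrix (Fin d) (Fin d) ℂ)
    (M0 M1 : Matrix (Fin d) (Fin d) ℂ) (f : List (Fin m)) : Set (Fin d → ℂ) :=
  { x : Fin d → ℂ | tWord E M0 M1 f (Matrix.vecMulVec x (star x)) = 0 }

/-- `PD_n`: union of `PD_f` over words of length `n`. -/
def PDn (E : Fin m → Fin r → Matrix (Fin d) (Fin d) ℂ)
    (M0 M1 : Matrix (Fin d) (Fin d) ℂ) (n : ℕ) : Set (Fin d → ℂ) :=
  { x : Fin d → ℂ | ∃ f : List (Fin m), f.length = n ∧ x ∈ PDword E M0 M1 f }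

/-- `PD`: the diverging pure states. -/
def PD (E : Fin m → Fin r → Matrix (Fin d) (Fin d) ℂ)
    (M0 M1 : Matrix (Fin d) (Fin d) ℂ) : Set (Fin d → ℂ) :=
  { x : Fin d → ℂ | ∃ s : ℕ → Fin m, tSched E M0 M1 s (Matrix.vecMulVec x (star x)) = 0 }

/-!
Each step splits the remaining mass, `tr σ = tr(M₀ σ M₀†) + tr(T_i σ)`, so the partial sums of
`t_s(σ)` telescope to `tr σ - tr(T_{s(≤N)} σ)`. Thus `t_s(σ) ≤ tr σ`, and `t(σ) = tr σ` says that
every schedule terminates from `σ` with probability `tr σ`. The schedule `i s` spends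
`tr(M₀ σ M₀†)` in its first step and then runs `s` from `T_i σ`, so this property passes from `σ`
to `T_i σ`, and by induction to every `T_f σ`. The converse is the case `f = ε`.
-/

section Termination

variable {E : Fin m → Fin r → Matrix (Fin d) (Fin d) ℂ} {M0 M1 : Matrix (Fin d) (Fin d) ℂ}

lemma Matrix.PosSemidef.trace_re_nonneg {n : Type*} [Fintype n] {A : Matrix n n ℂ}
    (hA : A.PosSemidef) :
    0 ≤ A.trace.re :=
  (Complex.nonneg_iff.mp hA.trace_nonneg).1

lemma Tstep_posSemidef (i : Fin m) {σ : Matrix (Fin d) (Fin d) ℂ} (hσ : σ.PosSemidef) :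
    (Tstep E M1 i σ).PosSemidef :=
  Matrix.posSemidef_sum _ fun _ _ => hσ.mul_mul_conjTranspose_same _

lemma Tword_posSemidef (f : List (Fin m)) {σ : Matrix (Fin d) (Fin d) ℂ} (hσ : σ.PosSemidef) :
    (Tword E M1 f σ).PosSemidef := by
  induction f generalizing σ with
  | nil => exact hσ
  | cons i f ih => exact ih (Tstep_posSemidef i hσ)

lemma Tword_append_singleton (f : List (Fin m)) (i : Fin m) (σ : Matrix (Fin d) (Fin d) ℂ) :
    Tword E M1 (f ++ [i]) σ = Tstep E M1 i (Tword E M1 f σ) :=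
  List.foldl_append ..

lemma trace_Tstep (hE : ∀ i, ∑ j, (E i j)ᴴ * E i j = 1) (i : Fin m)
    (σ : Matrix (Fin d) (Fin d) ℂ) :
    (Tstep E M1 i σ).trace = (M1 * σ * M1ᴴ).trace := by
  have hcycle : ∀ j, (E i j * M1 * σ * (E i j * M1)ᴴ).trace
      = ((E i j)ᴴ * E i j * (M1 * σ * M1ᴴ)).trace := fun j => by
    rw [conjTranspose_mul, ← trace_mul_cycle (E i j) (M1 * σ * M1ᴴ) (E i j)ᴴ]
    simp only [Matrix.mul_assoc]
  simp_rw [Tstep, trace_sum, hcycle, ← trace_sum, ← Finset.sum_mul, hE i, Matrix.one_mul]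

lemma trace_M0_add_trace_Tstep (hE : ∀ i, ∑ j, (E i j)ᴴ * E i j = 1)
    (hM : M0ᴴ * M0 + M1ᴴ * M1 = 1) (i : Fin m) (σ : Matrix (Fin d) (Fin d) ℂ) :
    (M0 * σ * M0ᴴ).trace.re + (Tstep E M1 i σ).trace.re = σ.trace.re := by
  rw [← Complex.add_re, trace_Tstep hE, trace_mul_cycle M0, trace_mul_cycle M1, ← trace_add,
    ← Matrix.add_mul, hM, Matrix.one_mul]

lemma prefixn_succ (s : ℕ → Fin m) (n : ℕ) : prefixn s (n + 1) = prefixn s n ++ [s n] := by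
  rw [prefixn, prefixn, List.ofFn_succ']
  simp

lemma prefixn_succ_cons (i : Fin m) (s : ℕ → Fin m) (n : ℕ) :
    prefixn (Stream'.cons i s) (n + 1) = i :: prefixn s n :=
  List.ofFn_succ

lemma sum_range_add_trace_Tword_prefixn (hE : ∀ i, ∑ j, (E i j)ᴴ * E i j = 1)
    (hM : M0ᴴ * M0 + M1ᴴ * M1 = 1) (s : ℕ → Fin m) (σ : Matrix (Fin d) (Fin d) ℂ) (N : ℕ) :
    ∑ n ∈ Finset.range N, (M0 * Tword E M1 (prefixn s n) σ * M0ᴴ).trace.re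
      + (Tword E M1 (prefixn s N) σ).trace.re = σ.trace.re := by
  induction N with
  | zero => simp [prefixn, Tword]
  | succ N ih =>
    rw [Finset.sum_range_succ, prefixn_succ, Tword_append_singleton, add_assoc,
      trace_M0_add_trace_Tstep hE hM, ih]

lemma sum_range_le_trace (hE : ∀ i, ∑ j, (E i j)ᴴ * E i j = 1)
    (hM : M0ᴴ * M0 + M1ᴴ * M1 = 1) (s : ℕ → Fin m) {σ : Matrix (Fin d) (Fin d) ℂ}
    (hσ : σ.PosSemidef) (N : ℕ) :
    ∑ n ∈ Finset.range N, (M0 * Tword E M1 (prefixn s n) σ * M0ᴴ).trace.re ≤ σ.trace.re := by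
  rw [← sum_range_add_trace_Tword_prefixn hE hM s σ N]
  exact le_add_of_nonneg_right (Tword_posSemidef _ hσ).trace_re_nonneg

lemma trace_M0_Tword_nonneg (s : ℕ → Fin m) {σ : Matrix (Fin d) (Fin d) ℂ}
    (hσ : σ.PosSemidef) (n : ℕ) :
    0 ≤ (M0 * Tword E M1 (prefixn s n) σ * M0ᴴ).trace.re :=
  ((Tword_posSemidef _ hσ).mul_mul_conjTranspose_same M0).trace_re_nonneg

lemma tSched_nonneg (s : ℕ → Fin m) {σ : Matrix (Fin d) (Fin d) ℂ} (hσ : σ.PosSemidef) :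
    0 ≤ tSched E M0 M1 s σ :=
  tsum_nonneg (trace_M0_Tword_nonneg s hσ)

lemma tSched_le_trace (hE : ∀ i, ∑ j, (E i j)ᴴ * E i j = 1)
    (hM : M0ᴴ * M0 + M1ᴴ * M1 = 1) (s : ℕ → Fin m) {σ : Matrix (Fin d) (Fin d) ℂ}
    (hσ : σ.PosSemidef) :
    tSched E M0 M1 s σ ≤ σ.trace.re :=
  Real.tsum_le_of_sum_range_le (trace_M0_Tword_nonneg s hσ) (sum_range_le_trace hE hM s hσ)

lemma tSched_cons (hE : ∀ i, ∑ j, (E i j)ᴴ * E i j = 1)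
    (hM : M0ᴴ * M0 + M1ᴴ * M1 = 1) (i : Fin m) (s : ℕ → Fin m)
    {σ : Matrix (Fin d) (Fin d) ℂ} (hσ : σ.PosSemidef) :
    tSched E M0 M1 (Stream'.cons i s) σ
      = (M0 * σ * M0ᴴ).trace.re + tSched E M0 M1 s (Tstep E M1 i σ) := by
  have hsum := summable_of_sum_range_le (trace_M0_Tword_nonneg (Stream'.cons i s) hσ)
    (sum_range_le_trace hE hM _ hσ)
  simp_rw [tSched, hsum.tsum_eq_zero_add, prefixn_succ_cons]
  rfl

lemma tInf_eq_trace_iff [Nonempty (Fin m)] (hE : ∀ i, ∑ j, (E i j)ᴴ * E i j = 1)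
    (hM : M0ᴴ * M0 + M1ᴴ * M1 = 1) {σ : Matrix (Fin d) (Fin d) ℂ} (hσ : σ.PosSemidef) :
    tInf E M0 M1 σ = σ.trace.re ↔ ∀ s, tSched E M0 M1 s σ = σ.trace.re := by
  have hbdd : BddBelow (Set.range fun s => tSched E M0 M1 s σ) :=
    ⟨0, Set.forall_mem_range.mpr fun s => tSched_nonneg s hσ⟩
  refine ⟨fun h s => le_antisymm (tSched_le_trace hE hM s hσ) (h ▸ ciInf_le hbdd s),
    fun h => ?_⟩
  simp only [tInf, h, ciInf_const]

lemma tInf_Tstep_eq_trace (hE : ∀ i, ∑ j, (E i j)ᴴ * E i j = 1)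
    (hM : M0ᴴ * M0 + M1ᴴ * M1 = 1) (i : Fin m) {σ : Matrix (Fin d) (Fin d) ℂ}
    (hσ : σ.PosSemidef) (h : tInf E M0 M1 σ = σ.trace.re) :
    tInf E M0 M1 (Tstep E M1 i σ) = (Tstep E M1 i σ).trace.re := by
  have : Nonempty (Fin m) := ⟨i⟩
  rw [tInf_eq_trace_iff hE hM hσ] at h
  rw [tInf_eq_trace_iff hE hM (Tstep_posSemidef i hσ)]
  intro s
  have hcons := tSched_cons hE hM i s hσ
  have hsplit := trace_M0_add_trace_Tstep hE hM i σ
  linarith [h (Stream'.cons i s)]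

lemma tInf_Tword_eq_trace (hE : ∀ i, ∑ j, (E i j)ᴴ * E i j = 1)
    (hM : M0ᴴ * M0 + M1ᴴ * M1 = 1) (f : List (Fin m)) {σ : Matrix (Fin d) (Fin d) ℂ}
    (hσ : σ.PosSemidef) (h : tInf E M0 M1 σ = σ.trace.re) :
    tInf E M0 M1 (Tword E M1 f σ) = (Tword E M1 f σ).trace.re := by
  induction f generalizing σ with
  | nil => exact h
  | cons i f ih => exact ih (Tstep_posSemidef i hσ) (tInf_Tstep_eq_trace hE hM i hσ h)

end Termination

theorem terminating_iff_all_reachable_terminating_general (d m r : ℕ)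
    (E : Fin m → Fin r → Matrix (Fin d) (Fin d) ℂ)
    (hE : ∀ i, ∑ j, (E i j)ᴴ * E i j = 1)
    (M0 M1 : Matrix (Fin d) (Fin d) ℂ)
    (hM : M0ᴴ * M0 + M1ᴴ * M1 = 1)
    (ρ : Matrix (Fin d) (Fin d) ℂ) (hρ : ρ.PosSemidef) :
    tInf E M0 M1 ρ = ρ.trace.re ↔
      ∀ f : List (Fin m),
        tInf E M0 M1 (Tword E M1 f ρ) = (Tword E M1 f ρ).trace.re :=
  ⟨fun h f => tInf_Tword_eq_trace hE hM f hρ h, fun h => h []⟩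

/-- `ρ` is terminating iff every reachable state `T_f(ρ)` is terminating. -/
theorem terminating_iff_all_reachable_terminating (d m r : ℕ) (hd : 0 < d) (hm : 0 < m)
    (E : Fin m → Fin r → Matrix (Fin d) (Fin d) ℂ)
    (hE : ∀ i, ∑ j, (E i j)ᴴ * E i j = 1)
    (M0 M1 : Matrix (Fin d) (Fin d) ℂ)
    (hM : M0ᴴ * M0 + M1ᴴ * M1 = 1)
    (ρ : Matrix (Fin d) (Fin d) ℂ) (hρ : ρ.PosSemidef) (htr : ρ.trace ≤ 1) :
    tInf E M0 M1 ρ = ρ.trace.re ↔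
      ∀ f : List (Fin m),
        tInf E M0 M1 (Tword E M1 f ρ) = (Tword E M1 f ρ).trace.re :=
  terminating_iff_all_reachable_terminating_general d m r E hE M0 M1 hM ρ hρ
end
end

section
/- For every word f over {1,…,m}: (i) PD_f ⊆ H_0 := {x ∈ ℂ^d : M_0 x = 0}; and (ii) for every k ∈ {1,…,m}, letting kf denote the word f with the letter k prepended (so T_{kf} = T_f ∘ T_k), one has PD_{kf} = {x ∈ ℂ^d : M_0 x = 0 and supp(T_k(x x†)) ⊆ PD_f}. -/
noncomputable section
open Matrix
open scoped ComplexOrder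

variable {d m r : ℕ}

/-!
Expanding every `T_k` into its Kraus operators `E_{k,j} M₁`, the termination probability becomes
`t_f(ρ) = ∑ tr(B ρ B†)`, where `B` runs over the operators `M₀ K` with `K` a product of Kraus
operators along a prefix of `f`. For `ρ ⪰ 0` each summand is nonnegative and vanishes iff
`B ρ = 0`, i.e. iff `supp ρ ⊆ ker B`. Hence `t_f(ρ) = 0` iff `supp ρ ⊆ PD_f = ⋂ ker B`, and both
claims follow from `t_{kf}(ρ) = tr(M₀ ρ M₀†) + t_f(T_k ρ)`.
-/

namespace Matrix.PosSemidef

variable {n l : Type*} [Fintype n] {σ : Matrix n n ℂ}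

open scoped MatrixOrder in
lemma mul_mul_conjTranspose_eq_zero_iff (hσ : σ.PosSemidef) (B : Matrix l n ℂ) :
    B * σ * Bᴴ = 0 ↔ B * σ = 0 := by
  classical
  obtain ⟨C, rfl⟩ := CStarAlgebra.nonneg_iff_eq_star_mul_self.mp hσ.nonneg
  rw [star_eq_conjTranspose, show B * (Cᴴ * C) * Bᴴ = B * Cᴴ * (B * Cᴴ)ᴴ by
      simp [Matrix.mul_assoc],
    self_mul_conjTranspose_eq_zero, mul_conjTranspose_mul_self_eq_zero]

lemma re_trace_mul_mul_conjTranspose_nonneg [Fintype l] (hσ : σ.PosSemidef) (B : Matrix l n ℂ) :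
    0 ≤ (B * σ * Bᴴ).trace.re :=
  (Complex.nonneg_iff.1 (hσ.mul_mul_conjTranspose_same B).trace_nonneg).1

lemma re_trace_mul_mul_conjTranspose_eq_zero_iff [Fintype l] (hσ : σ.PosSemidef)
    (B : Matrix l n ℂ) : (B * σ * Bᴴ).trace.re = 0 ↔ B * σ = 0 := by
  classical
  have hBσB := hσ.mul_mul_conjTranspose_same B
  have him := (Complex.nonneg_iff.1 hBσB.trace_nonneg).2
  rw [← hσ.mul_mul_conjTranspose_eq_zero_iff, ← hBσB.trace_eq_zero_iff, Complex.ext_iff, ← him]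
  simp

lemma mul_sum_conj_eq_zero_iff [Fintype l] {ι : Type*} [Fintype ι] (hσ : σ.PosSemidef)
    (B : Matrix l n ℂ) (A : ι → Matrix n n ℂ) :
    B * ∑ j, A j * σ * (A j)ᴴ = 0 ↔ ∀ j, B * A j * σ = 0 := by
  have hsum : (∑ j, A j * σ * (A j)ᴴ).PosSemidef :=
    posSemidef_sum _ fun j _ => hσ.mul_mul_conjTranspose_same (A j)
  have hconj : ∀ j, B * (A j * σ * (A j)ᴴ) * Bᴴ = B * A j * σ * (B * A j)ᴴ := fun j => by
    simp only [conjTranspose_mul, Matrix.mul_assoc]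
  rw [← hsum.re_trace_mul_mul_conjTranspose_eq_zero_iff, Matrix.mul_sum, Matrix.sum_mul,
    trace_sum, Complex.re_sum, Finset.sum_eq_zero_iff_of_nonneg fun j _ => by
      rw [hconj]; exact hσ.re_trace_mul_mul_conjTranspose_nonneg _]
  simp only [Finset.mem_univ, true_imp_iff, hconj, hσ.re_trace_mul_mul_conjTranspose_eq_zero_iff]

end Matrix.PosSemidef

lemma Matrix.mul_vecMulVec_self_star_eq_zero_iff {n : Type*} [Fintype n] (B : Matrix n n ℂ)
    (x : n → ℂ) : B * vecMulVec x (star x) = 0 ↔ B *ᵥ x = 0 := by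
  rw [mul_vecMulVec, vecMulVec_eq_zero, star_eq_zero]
  exact ⟨fun h => h.elim id fun hx => by simp [hx], Or.inl⟩

lemma mul_eq_zero_iff_supp_le_ker (B σ : Matrix (Fin d) (Fin d) ℂ) :
    B * σ = 0 ↔ supp σ ≤ LinearMap.ker (toLin' B) := by
  rw [supp, LinearMap.range_le_ker_iff, ← Matrix.toLin'_mul, LinearEquiv.map_eq_zero_iff]

section Kraus

variable (E : Fin m → Fin r → Matrix (Fin d) (Fin d) ℂ) (M0 M1 : Matrix (Fin d) (Fin d) ℂ)

def terminationOps : List (Fin m) → Set (Matrix (Fin d) (Fin d) ℂ)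
  | [] => {M0}
  | k :: f => insert M0 (⋃ j, (· * (E k j * M1)) '' terminationOps f)

lemma mem_terminationOps_self (f : List (Fin m)) : M0 ∈ terminationOps E M0 M1 f := by
  cases f <;> simp [terminationOps]

lemma forall_mem_terminationOps_cons {P : Matrix (Fin d) (Fin d) ℂ → Prop} (k : Fin m)
    (f : List (Fin m)) :
    (∀ B ∈ terminationOps E M0 M1 (k :: f), P B) ↔
      P M0 ∧ ∀ B ∈ terminationOps E M0 M1 f, ∀ j, P (B * (E k j * M1)) := by
  simp only [terminationOps, Set.forall_mem_insert, Set.mem_iUnion, Set.mem_image]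
  exact and_congr_right fun _ =>
    ⟨fun h B hB j => h _ ⟨j, B, hB, rfl⟩, fun h _ ⟨j, B, hB, hBj⟩ => hBj ▸ h B hB j⟩

variable {E M1} in
lemma posSemidef_Tstep {ρ : Matrix (Fin d) (Fin d) ℂ} (hρ : ρ.PosSemidef) (k : Fin m) :
    (Tstep E M1 k ρ).PosSemidef :=
  posSemidef_sum _ fun _ _ => hρ.mul_mul_conjTranspose_same _

lemma tWord_nil (ρ : Matrix (Fin d) (Fin d) ℂ) :
    tWord E M0 M1 [] ρ = (M0 * ρ * M0ᴴ).trace.re := by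
  simp [tWord, Tword]

lemma tWord_cons (k : Fin m) (f : List (Fin m)) (ρ : Matrix (Fin d) (Fin d) ℂ) :
    tWord E M0 M1 (k :: f) ρ = (M0 * ρ * M0ᴴ).trace.re + tWord E M0 M1 f (Tstep E M1 k ρ) := by
  rw [tWord, List.length_cons, Finset.sum_range_succ', add_comm]
  rfl

lemma tWord_nonneg : ∀ (f : List (Fin m)) {ρ : Matrix (Fin d) (Fin d) ℂ}, ρ.PosSemidef →
    0 ≤ tWord E M0 M1 f ρ
  | [], _, hρ => (tWord_nil E M0 M1 _).symm ▸ hρ.re_trace_mul_mul_conjTranspose_nonneg M0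
  | k :: f, _, hρ => (tWord_cons E M0 M1 k f _).symm ▸
      add_nonneg (hρ.re_trace_mul_mul_conjTranspose_nonneg M0)
        (tWord_nonneg f (posSemidef_Tstep hρ k))

lemma tWord_cons_eq_zero_iff (k : Fin m) (f : List (Fin m)) {ρ : Matrix (Fin d) (Fin d) ℂ}
    (hρ : ρ.PosSemidef) :
    tWord E M0 M1 (k :: f) ρ = 0 ↔ M0 * ρ = 0 ∧ tWord E M0 M1 f (Tstep E M1 k ρ) = 0 := by
  rw [tWord_cons, add_eq_zero_iff_of_nonneg (hρ.re_trace_mul_mul_conjTranspose_nonneg M0)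
    (tWord_nonneg E M0 M1 f (posSemidef_Tstep hρ k)),
    hρ.re_trace_mul_mul_conjTranspose_eq_zero_iff]

lemma tWord_eq_zero_iff : ∀ (f : List (Fin m)) {ρ : Matrix (Fin d) (Fin d) ℂ}, ρ.PosSemidef →
    (tWord E M0 M1 f ρ = 0 ↔ ∀ B ∈ terminationOps E M0 M1 f, B * ρ = 0)
  | [], _, hρ => by
    simp [tWord_nil, terminationOps, hρ.re_trace_mul_mul_conjTranspose_eq_zero_iff]
  | k :: f, _, hρ => by
    rw [tWord_cons_eq_zero_iff E M0 M1 k f hρ, tWord_eq_zero_iff f (posSemidef_Tstep hρ k),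
      forall_mem_terminationOps_cons]
    simp only [Tstep, hρ.mul_sum_conj_eq_zero_iff]

lemma mem_PDword_iff {f : List (Fin m)} {x : Fin d → ℂ} :
    x ∈ PDword E M0 M1 f ↔ ∀ B ∈ terminationOps E M0 M1 f, B *ᵥ x = 0 :=
  (tWord_eq_zero_iff E M0 M1 f (posSemidef_vecMulVec_self_star x)).trans <| by
    simp only [mul_vecMulVec_self_star_eq_zero_iff]

lemma tWord_eq_zero_iff_supp_subset (f : List (Fin m)) {σ : Matrix (Fin d) (Fin d) ℂ}
    (hσ : σ.PosSemidef) :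
    tWord E M0 M1 f σ = 0 ↔ (supp σ : Set (Fin d → ℂ)) ⊆ PDword E M0 M1 f := by
  simp only [tWord_eq_zero_iff E M0 M1 f hσ, mul_eq_zero_iff_supp_le_ker, SetLike.le_def,
    Set.subset_def, SetLike.mem_coe, mem_PDword_iff, LinearMap.mem_ker, toLin'_apply]
  exact ⟨fun h x hx B hB => h B hB hx, fun h B hB x hx => h x hx B hB⟩

end Kraus

theorem PDword_subset_and_recursion_general (d m r : ℕ)
    (E : Fin m → Fin r → Matrix (Fin d) (Fin d) ℂ)
    (M0 M1 : Matrix (Fin d) (Fin d) ℂ)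
    (f : List (Fin m)) :
    (PDword E M0 M1 f ⊆ { x : Fin d → ℂ | M0.mulVec x = 0 }) ∧
    (∀ k : Fin m,
      PDword E M0 M1 (k :: f) =
        { x : Fin d → ℂ | M0.mulVec x = 0 ∧
            (supp (Tstep E M1 k (Matrix.vecMulVec x (star x))) : Set (Fin d → ℂ))
              ⊆ PDword E M0 M1 f }) := by
  refine ⟨fun x hx => (mem_PDword_iff E M0 M1).1 hx M0 (mem_terminationOps_self E M0 M1 f),
    fun k => Set.ext fun x => ?_⟩
  have hx := posSemidef_vecMulVec_self_star x
  change tWord E M0 M1 (k :: f) _ = 0 ↔ M0 *ᵥ x = 0 ∧ _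
  rw [tWord_cons_eq_zero_iff E M0 M1 k f hx, mul_vecMulVec_self_star_eq_zero_iff,
    tWord_eq_zero_iff_supp_subset E M0 M1 f (posSemidef_Tstep hx k)]

/-- `PD_f ⊆ H₀` and the recursion
`PD_{kf} = H₀ ∩ T_k⁻¹(PD_f)`. -/
theorem PDword_subset_and_recursion (d m r : ℕ) (hd : 0 < d) (hm : 0 < m)
    (E : Fin m → Fin r → Matrix (Fin d) (Fin d) ℂ)
    (hE : ∀ i, ∑ j, (E i j)ᴴ * E i j = 1)
    (M0 M1 : Matrix (Fin d) (Fin d) ℂ)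
    (hM : M0ᴴ * M0 + M1ᴴ * M1 = 1)
    (f : List (Fin m)) :
    (PDword E M0 M1 f ⊆ { x : Fin d → ℂ | M0.mulVec x = 0 }) ∧
    (∀ k : Fin m,
      PDword E M0 M1 (k :: f) =
        { x : Fin d → ℂ | M0.mulVec x = 0 ∧
            (supp (Tstep E M1 k (Matrix.vecMulVec x (star x))) : Set (Fin d → ℂ))
              ⊆ PDword E M0 M1 f }) :=
  PDword_subset_and_recursion_general d m r E M0 M1 f
end
end
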